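/- Let A = (Q, Σ, δ, ρ) be an invertible reversible Mealy automaton such that no connected component of A is bireversible (equivalently, since every connected component of an invertible reversible automaton is invertible and reversible, no connected component of A is coreversible). Then every element of the semigroup generated by A has infinite order: for every nonempty word u ∈ Q⁺, the transformations ρ_u, ρ_u², ρ_u³, … of Σ* are pairwise distinct. In particular the generated semigroup ⟨A⟩⁺ is torsion-free. -/

import Mathlib

/-!
Mealy automata: common definitions.

A Mealy automaton on stateset `Q` and alphabet `Γ` is given by transition
functions `δ : Γ → Q → Q` (for each input letter) and output functions
`ρ : Q → Γ → Γ` (for each state); it has a transition `x —i|j→ y` exactly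
when `δ i x = y` and `ρ x i = j`.
-/

/-- Extended output function `ρ_x : Γ* → Γ*` of a single state. -/
def rhoStar {Q Γ : Type*} (δ : Γ → Q → Q) (ρ : Q → Γ → Γ) : Q → List Γ → List Γ
  | _, [] => []
  | x, i :: s => ρ x i :: rhoStar δ ρ (δ i x) s

/-- `ρ_u : Γ* → Γ*` for a word `u = x₁⋯x_n` of states: `ρ_u = ρ_{x_n} ∘ ⋯ ∘ ρ_{x₁}`. -/
def rhoWord {Q Γ : Type*} (δ : Γ → Q → Q) (ρ : Q → Γ → Γ) : List Q → List Γ → List Γ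
  | [], s => s
  | x :: u, s => rhoWord δ ρ u (rhoStar δ ρ x s)

/-- `ρ_u : Γ → Γ` on single letters (the output function of the power automaton). -/
def rhoLetter {Q Γ : Type*} (ρ : Q → Γ → Γ) : List Q → Γ → Γ
  | [], i => i
  | x :: u, i => rhoLetter ρ u (ρ x i)

/-- Extended transition function `δ_i : Q* → Q*` (the transition function of powers). -/
def deltaStar {Q Γ : Type*} (δ : Γ → Q → Q) (ρ : Q → Γ → Γ) : Γ → List Q → List Q
  | _, [] => []
  | i, x :: u => δ i x :: deltaStar δ ρ (ρ x i) u

/-- Sequential application `δ_s = δ_{s_n} ∘ ⋯ ∘ δ_{s₁}` of the letters of a word `s`. -/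
def applyWord {S Γ : Type*} (d : Γ → S → S) : List Γ → S → S
  | [], x => x
  | i :: s, x => applyWord d s (d i x)

/-- The orbit `{δ_s(x) : s ∈ Γ*}` of a state: for reversible automata this is
exactly the (strongly) connected component of `x`. -/
def orbitOf {S Γ : Type*} (d : Γ → S → S) (x : S) : Set S :=
  {y | ∃ s : List Γ, applyWord d s x = y}

/-- An automaton is invertible when every output function is a permutation. -/
def MInvertible {Q Γ : Type*} (ρ : Q → Γ → Γ) : Prop := ∀ x, Function.Bijective (ρ x)

/-- An automaton is reversible when every transition function is a permutation. -/
def MReversible {Q Γ : Type*} (δ : Γ → Q → Q) : Prop := ∀ i, Function.Bijective (δ i)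

/-- Coreversibility: `δ_i(y) = δ_{i'}(z)` and `ρ_y(i) = ρ_z(i')` imply `y = z`. -/
def MCoreversible {Q Γ : Type*} (δ : Γ → Q → Q) (ρ : Q → Γ → Γ) : Prop :=
  ∀ y z : Q, ∀ i i' : Γ, δ i y = δ i' z → ρ y i = ρ z i' → y = z

/-- Bireversible: invertible, reversible and coreversible. -/
def MBireversible {Q Γ : Type*} (δ : Γ → Q → Q) (ρ : Q → Γ → Γ) : Prop :=
  MInvertible ρ ∧ MReversible δ ∧ MCoreversible δ ρ

/-- Connectedness: every state is reachable from every state. -/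
def MConnected {Q Γ : Type*} (δ : Γ → Q → Q) : Prop :=
  ∀ x y : Q, ∃ s : List Γ, applyWord δ s x = y

/-- Invertibility of a component `C` (as an automaton with stateset `C`). -/
def CompInvertible {S Γ : Type*} (r : S → Γ → Γ) (C : Set S) : Prop :=
  ∀ x ∈ C, Function.Bijective (r x)

/-- Reversibility of a component `C`: each transition function permutes `C`. -/
def CompReversible {S Γ : Type*} (d : Γ → S → S) (C : Set S) : Prop :=
  ∀ i : Γ, Set.BijOn (d i) C C

/-- Coreversibility of a component `C` (as an automaton with stateset `C`). -/
def CompCoreversible {S Γ : Type*} (d : Γ → S → S) (r : S → Γ → Γ) (C : Set S) : Prop :=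
  ∀ y ∈ C, ∀ z ∈ C, ∀ i i' : Γ, d i y = d i' z → r y i = r z i' → y = z

/-- Bireversibility of a component `C` (as an automaton with stateset `C`). -/
def CompBireversible {S Γ : Type*} (d : Γ → S → S) (r : S → Γ → Γ) (C : Set S) : Prop :=
  CompInvertible r C ∧ CompReversible d C ∧ CompCoreversible d r C

/-- Transition functions of the product `A × B` of two Mealy automata. -/
def prodD {Q Q' Γ : Type*} (δ : Γ → Q → Q) (ρ : Q → Γ → Γ) (δ' : Γ → Q' → Q') :
    Γ → Q × Q' → Q × Q' :=
  fun i p => (δ i p.1, δ' (ρ p.1 i) p.2)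

/-- Output functions of the product `A × B` of two Mealy automata. -/
def prodR {Q Q' Γ : Type*} (ρ : Q → Γ → Γ) (ρ' : Q' → Γ → Γ) : Q × Q' → Γ → Γ :=
  fun p i => ρ' p.2 (ρ p.1 i)

/-- `u^n`: the `n`-fold concatenation of a word with itself. -/
def wordPow {Q : Type*} (u : List Q) : ℕ → List Q
  | 0 => []
  | n + 1 => u ++ wordPow u n

/-!
If `ρ_u^(p+1) = ρ_u^(q+1)` with `p < q`, injectivity of `ρ_u` gives `ρ_w = id` for the nonempty
word `w = u^(q-p)`; write `w = w₀ b` and let `C` be the component of `b`. Words `v` with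
`ρ_v = id` are stable under the extended transitions `δ_j`, and each `δ_j` permutes the finite
orbit of `w` in `Q*`, whose words all end in a state of `C` and, by invertibility, end in every
state of `C`. So for `t ∈ C` and a letter `j`, some identity word `v₁ y` of that orbit is sent
by `δ_j` to a word ending in `t`; its last transition `y —i|j→ t` shows that
`(y, i) ↦ (δ_i y, ρ_y i)` is onto, hence injective, on the finite set `C × Σ`. This is
coreversibility of `C`, which is therefore bireversible.
-/

open Function Set

section Orbit

variable {S Γ : Type*} (d : Γ → S → S)

theorem applyWord_append (s t : List Γ) (x : S) :
    applyWord d (s ++ t) x = applyWord d t (applyWord d s x) := by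
  induction s generalizing x with
  | nil => rfl
  | cons i s ih => exact ih (d i x)

theorem mapsTo_orbitOf (x : S) (i : Γ) : MapsTo (d i) (orbitOf d x) (orbitOf d x) := by
  rintro _ ⟨s, rfl⟩
  exact ⟨s ++ [i], applyWord_append d s [i] x⟩

variable {d}

theorem orbitOf_subset_of_mapsTo {P : Set S} (hP : ∀ i, MapsTo (d i) P P) {x : S} (hx : x ∈ P) :
    orbitOf d x ⊆ P := by
  rintro _ ⟨s, rfl⟩
  induction s generalizing x with
  | nil => exact hx
  | cons i s ih => exact ih (hP i hx)

theorem orbitOf_subset_of_mem {x y : S} (hy : y ∈ orbitOf d x) : orbitOf d y ⊆ orbitOf d x :=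
  orbitOf_subset_of_mapsTo (mapsTo_orbitOf d x) hy

theorem bijOn_orbitOf {i : Γ} (hi : Injective (d i)) {x : S} (hfin : (orbitOf d x).Finite) :
    BijOn (d i) (orbitOf d x) (orbitOf d x) :=
  (hfin.injOn_iff_bijOn_of_mapsTo (mapsTo_orbitOf d x i)).mp hi.injOn

end Orbit

theorem compCoreversible_of_surjOn {S Γ : Type*} [Finite Γ] {d : Γ → S → S}
    {r : S → Γ → Γ} {C : Set S} (hCfin : C.Finite) (hC : ∀ i, MapsTo (d i) C C)
    (hsurj : ∀ t ∈ C, ∀ j, ∃ y ∈ C, ∃ i, d i y = t ∧ r y i = j) :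
    CompCoreversible d r C := by
  set g : S × Γ → S × Γ := fun p => (d p.2 p.1, r p.1 p.2)
  have hmaps : MapsTo g (C ×ˢ univ) (C ×ˢ univ) := fun p hp => ⟨hC p.2 hp.1, trivial⟩
  have hgsurj : SurjOn g (C ×ˢ univ) (C ×ˢ univ) := by
    rintro ⟨t, j⟩ ⟨ht, -⟩
    obtain ⟨y, hy, i, rfl, rfl⟩ := hsurj t ht j
    exact ⟨(y, i), ⟨hy, trivial⟩, rfl⟩
  have hinj := ((hCfin.prod (toFinite univ)).surjOn_iff_bijOn_of_mapsTo hmaps).mp hgsurj |>.injOn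
  intro y hy z hz i i' hd hr
  have hg : g (y, i) = g (z, i') := Prod.ext hd hr
  exact congrArg Prod.fst (hinj ⟨hy, trivial⟩ ⟨hz, trivial⟩ hg)

section Mealy

variable {Q Γ : Type*} {δ : Γ → Q → Q} {ρ : Q → Γ → Γ}

theorem rhoStar_injective (hInv : MInvertible ρ) (x : Q) : Injective (rhoStar δ ρ x) := by
  intro s t h
  induction s generalizing t x with
  | nil => cases t <;> simp_all [rhoStar]
  | cons i s ih =>
    cases t with
    | nil => simp [rhoStar] at h
    | cons j t =>
      obtain ⟨hij, hst⟩ := List.cons.inj h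
      obtain rfl := (hInv x).injective hij
      exact congrArg _ (ih _ hst)

theorem rhoWord_injective (hInv : MInvertible ρ) (u : List Q) : Injective (rhoWord δ ρ u) := by
  induction u with
  | nil => exact injective_id
  | cons x u ih => exact ih.comp (rhoStar_injective hInv x)

theorem rhoWord_append (u v : List Q) :
    rhoWord δ ρ (u ++ v) = rhoWord δ ρ v ∘ rhoWord δ ρ u := by
  funext s
  induction u generalizing s with
  | nil => rfl
  | cons x u ih => exact ih _

theorem rhoWord_wordPow (u : List Q) (n : ℕ) :
    rhoWord δ ρ (wordPow u n) = (rhoWord δ ρ u)^[n] := by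
  induction n with
  | zero => rfl
  | succ n ih => rw [wordPow, rhoWord_append, ih, iterate_succ]

theorem rhoWord_nil (u : List Q) : rhoWord δ ρ u [] = [] := by
  induction u with
  | nil => rfl
  | cons x u ih => exact ih

theorem rhoWord_cons (v : List Q) (i : Γ) (s : List Γ) :
    rhoWord δ ρ v (i :: s) = rhoLetter ρ v i :: rhoWord δ ρ (deltaStar δ ρ i v) s := by
  induction v generalizing i s with
  | nil => rfl
  | cons x u ih => exact ih _ _

theorem rhoLetter_eq_id_of_rhoWord_eq_id {v : List Q} (h : rhoWord δ ρ v = id) :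
    rhoLetter ρ v = id := by
  funext i
  simpa [rhoWord_cons, rhoWord_nil] using congrFun h [i]

theorem rhoWord_deltaStar_eq_id {v : List Q} (h : rhoWord δ ρ v = id) (i : Γ) :
    rhoWord δ ρ (deltaStar δ ρ i v) = id := by
  funext s
  have hs := congrFun h (i :: s)
  simp only [rhoWord_cons, id, List.cons.injEq] at hs
  exact hs.2

theorem rhoLetter_surjective (hInv : MInvertible ρ) (v : List Q) :
    Surjective (rhoLetter ρ v) := by
  induction v with
  | nil => exact surjective_id
  | cons x u ih => exact ih.comp (hInv x).surjective

theorem rhoLetter_concat (v : List Q) (y : Q) (i : Γ) :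
    rhoLetter ρ (v ++ [y]) i = ρ y (rhoLetter ρ v i) := by
  induction v generalizing i with
  | nil => rfl
  | cons x u ih => exact ih _

theorem deltaStar_concat (i : Γ) (v : List Q) (y : Q) :
    deltaStar δ ρ i (v ++ [y]) = deltaStar δ ρ i v ++ [δ (rhoLetter ρ v i) y] := by
  induction v generalizing i with
  | nil => rfl
  | cons x u ih => simp [deltaStar, rhoLetter, ih]

theorem deltaStar_length (i : Γ) (v : List Q) : (deltaStar δ ρ i v).length = v.length := by
  induction v generalizing i with
  | nil => rfl
  | cons x u ih => simp [deltaStar, ih]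

theorem deltaStar_injective (hRev : MReversible δ) (i : Γ) : Injective (deltaStar δ ρ i) := by
  intro v w h
  induction v generalizing w i with
  | nil => cases w <;> simp_all [deltaStar]
  | cons x v ih =>
    cases w with
    | nil => simp [deltaStar] at h
    | cons y w =>
      obtain ⟨hxy, hvw⟩ := List.cons.inj h
      obtain rfl := (hRev i).injective hxy
      exact congrArg _ (ih _ hvw)

theorem finite_orbitOf_deltaStar [Finite Q] (v : List Q) :
    (orbitOf (deltaStar δ ρ) v).Finite :=
  (List.finite_length_eq Q v.length).subset <|
    orbitOf_subset_of_mapsTo (fun i _ hw => (deltaStar_length i _).trans hw) rfl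

theorem exists_append_mem_orbitOf_deltaStar (hInv : MInvertible ρ) {y t : Q}
    (ht : t ∈ orbitOf δ y) (v : List Q) :
    ∃ v', v' ++ [t] ∈ orbitOf (deltaStar δ ρ) (v ++ [y]) := by
  obtain ⟨s, rfl⟩ := ht
  induction s generalizing v y with
  | nil => exact ⟨v, [], rfl⟩
  | cons j s ih =>
    obtain ⟨i, hi⟩ := rhoLetter_surjective hInv v j
    obtain ⟨v', hv'⟩ := ih (y := δ j y) (deltaStar δ ρ i v)
    refine ⟨v', orbitOf_subset_of_mem ⟨[i], ?_⟩ hv'⟩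
    rw [← hi]
    exact deltaStar_concat i v y

theorem exists_transition_of_rhoWord_eq_id [Finite Q] (hInv : MInvertible ρ)
    (hRev : MReversible δ) {w : List Q} {b : Q} (hw : rhoWord δ ρ (w ++ [b]) = id)
    {t : Q} (ht : t ∈ orbitOf δ b) (j : Γ) :
    ∃ y ∈ orbitOf δ b, ∃ i, δ i y = t ∧ ρ y i = j := by
  obtain ⟨v', hv'⟩ := exists_append_mem_orbitOf_deltaStar hInv ht w
  obtain ⟨v, hv, hvj⟩ :=
    (bijOn_orbitOf (deltaStar_injective hRev j) (finite_orbitOf_deltaStar _)).surjOn hv'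
  obtain ⟨v₁, y, rfl, hy⟩ : ∃ v₁ y, v = v₁ ++ [y] ∧ y ∈ orbitOf δ b := by
    refine orbitOf_subset_of_mapsTo (P := {v | ∃ v₁ y, v = v₁ ++ [y] ∧ y ∈ orbitOf δ b})
      ?_ ⟨w, b, rfl, [], rfl⟩ hv
    rintro i _ ⟨v₁, y, rfl, hy⟩
    exact ⟨_, _, deltaStar_concat i v₁ y, mapsTo_orbitOf δ b _ hy⟩
  have hid : rhoWord δ ρ (v₁ ++ [y]) = id :=
    orbitOf_subset_of_mapsTo (P := {v | rhoWord δ ρ v = id})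
      (fun i _ hv => rhoWord_deltaStar_eq_id hv i) hw hv
  rw [deltaStar_concat] at hvj
  refine ⟨y, hy, rhoLetter ρ v₁ j, ?_, ?_⟩
  · simpa using (List.append_inj' hvj rfl).2
  · have hj := congrFun (rhoLetter_eq_id_of_rhoWord_eq_id hid) j
    rwa [rhoLetter_concat] at hj

theorem compBireversible_of_rhoWord_eq_id [Finite Q] [Finite Γ] (hInv : MInvertible ρ)
    (hRev : MReversible δ) {w : List Q} {b : Q} (hw : rhoWord δ ρ (w ++ [b]) = id) :
    CompBireversible δ ρ (orbitOf δ b) :=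
  ⟨fun y _ => hInv y, fun i => bijOn_orbitOf (hRev i).injective (toFinite _),
    compCoreversible_of_surjOn (toFinite _) (mapsTo_orbitOf δ b)
      fun _ ht j => exists_transition_of_rhoWord_eq_id hInv hRev hw ht j⟩

end Mealy

theorem torsionFree_of_no_bireversible_component_general
    {Q Γ : Type*} [Fintype Q] [Fintype Γ]
    (δ : Γ → Q → Q) (ρ : Q → Γ → Γ)
    (hInv : MInvertible ρ) (hRev : MReversible δ)
    (hNoBir : ∀ x : Q, ¬ CompBireversible δ ρ (orbitOf δ x)) :
    ∀ u : List Q, u ≠ [] → ∀ p q : ℕ,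
      (rhoWord δ ρ u)^[p + 1] = (rhoWord δ ρ u)^[q + 1] → p = q := by
  have rhoWord_ne_id : ∀ w : List Q, w ≠ [] → rhoWord δ ρ w ≠ id := by
    intro w hw hid
    obtain ⟨w₀, b, rfl⟩ := (List.eq_nil_or_concat' w).resolve_left hw
    exact hNoBir b (compBireversible_of_rhoWord_eq_id hInv hRev hid)
  intro u hu p q hpq
  wlog hle : p ≤ q generalizing p q
  · exact (this q p hpq.symm (le_of_not_ge hle)).symm
  obtain ⟨n, rfl⟩ := Nat.exists_eq_add_of_le hle
  cases n with
  | zero => rfl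
  | succ n =>
    refine absurd ?_ (rhoWord_ne_id (wordPow u (n + 1)) (by simp [wordPow, hu]))
    rw [rhoWord_wordPow]
    funext s
    refine iterate_cancel_of_add (rhoWord_injective hInv u) (n := p + 1) ?_
    rw [hpq, show n + 1 + (p + 1) = p + (n + 1) + 1 by omega]

/-- An invertible reversible Mealy automaton none of whose
connected components is bireversible generates a torsion-free semigroup:
for every nonempty word `u` of states, the positive powers of `ρ_u` are
pairwise distinct. -/
theorem torsionFree_of_no_bireversible_component
    {Q Γ : Type*} [Fintype Q] [Fintype Γ] [Nonempty Q] [Nonempty Γ]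
    (δ : Γ → Q → Q) (ρ : Q → Γ → Γ)
    (hInv : MInvertible ρ) (hRev : MReversible δ)
    (hNoBir : ∀ x : Q, ¬ CompBireversible δ ρ (orbitOf δ x)) :
    ∀ u : List Q, u ≠ [] → ∀ p q : ℕ,
      (rhoWord δ ρ u)^[p + 1] = (rhoWord δ ρ u)^[q + 1] → p = q :=
  torsionFree_of_no_bireversible_component_general δ ρ hInv hRev hNoBir
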